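/- Let p ≥ 5 be a prime. For the two-parameter family y² = x³ + t² x + s t⁴, the second-moment sum satisfies ∑_{t mod p} ∑_{s mod p} a_{t,s}(p)² = p³ − 2p² + p − 2(p² − p)·χ(−3), where a_{t,s}(p) := −∑_{x mod p} χ(x³ + t² x + s t⁴). -/

import Mathlib

/-!
For `t ≠ 0` the substitution `c = s t⁴` turns the inner sum over `s` into
`∑_c (∑_x χ(f x + c))²` with `f x = x³ + t² x`. Expanding the square and using
`∑_c χ(A + c) χ(B + c) = p [A = B] - 1`, this equals `p N - p²`, where `N` counts the pairs
with `f x = f y`. Since `f x - f y = (x - y)(x² + x y + y² + t²)`, `N` is the size of the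
diagonal plus the conic `x² + x y + y² = -t²` minus their intersection, which is
`p + (p - χ(-3)) - (1 + χ(-3))`. For `t = 0` the inner sum is `∑_x χ(x³) = 0`.
-/

open Finset

variable {F : Type*} [Field F] [Fintype F] [DecidableEq F]

lemma card_filter_sq_eq (hF : ringChar F ≠ 2) (a : F) :
    (#{x | x ^ 2 = a} : ℤ) = quadraticChar F a + 1 := by
  rw [← quadraticChar_card_sqrts hF a, Set.toFinset_ofPred]

lemma quadraticChar_sum_affine (hF : ringChar F ≠ 2) {a : F} (ha : a ≠ 0) (b : F) :
    ∑ w, quadraticChar F (a * w + b) = 0 := by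
  rw [← quadraticChar_sum_zero hF]
  exact ((Equiv.mulLeft₀ a ha).trans (Equiv.addRight b)).sum_comp (quadraticChar F)

lemma quadraticChar_sum_mul_self :
    ∑ c : F, quadraticChar F c * quadraticChar F c = Fintype.card F - 1 := by
  have hterm (c : F) : quadraticChar F c * quadraticChar F c = 1 - if c = 0 then 1 else 0 := by
    rcases eq_or_ne c 0 with rfl | hc
    · simp
    · rw [← sq, quadraticChar_sq_one hc, if_neg hc, sub_zero]
  rw [sum_congr rfl fun c _ => hterm c, sum_sub_distrib, sum_ite_eq' univ, if_pos (mem_univ _)]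
  simp

lemma quadraticChar_sum_mul_affine (hF : ringChar F ≠ 2) (a : F) {b : F} (hb : b ≠ 0) :
    ∑ w, quadraticChar F w * quadraticChar F (a * w + b) = -quadraticChar F a := by
  -- `w (a w + b) = w² (b w⁻¹ + a)`, and at `w = 0` the junk value `0⁻¹ = 0` leaves `χ a`
  have hterm (w : F) : quadraticChar F w * quadraticChar F (a * w + b)
      = quadraticChar F (b * w⁻¹ + a) - if w = 0 then quadraticChar F a else 0 := by
    rcases eq_or_ne w 0 with rfl | hw
    · simp
    · rw [if_neg hw, sub_zero, ← map_mul,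
        show w * (a * w + b) = w ^ 2 * (b * w⁻¹ + a) by field_simp; ring,
        map_mul, quadraticChar_sq_one' hw, one_mul]
  have hinv : ∑ w : F, quadraticChar F (b * w⁻¹ + a) = 0 := by
    rw [← quadraticChar_sum_affine hF hb a]
    exact Equiv.sum_comp (Equiv.inv F) (fun w => quadraticChar F (b * w + a))
  rw [sum_congr rfl fun w _ => hterm w, sum_sub_distrib, hinv, sum_ite_eq' univ,
    if_pos (mem_univ _), zero_sub]

lemma quadraticChar_sum_add_mul_add (hF : ringChar F ≠ 2) (A B : F) :
    ∑ c, quadraticChar F (A + c) * quadraticChar F (B + c)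
      = if A = B then (Fintype.card F : ℤ) - 1 else -1 := by
  rw [Fintype.sum_equiv (Equiv.addLeft A) _
    (fun c => quadraticChar F c * quadraticChar F (1 * c + (B - A))) fun c => by
      simp only [Equiv.coe_addLeft]; ring_nf]
  split_ifs with hAB
  · simp only [hAB, sub_self, one_mul, add_zero, quadraticChar_sum_mul_self]
  · rw [quadraticChar_sum_mul_affine hF 1 (sub_ne_zero.mpr (Ne.symm hAB)), map_one]

lemma quadraticChar_sum_sq_mul_add (hF : ringChar F ≠ 2) {a b : F} (ha : a ≠ 0) (hb : b ≠ 0) :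
    ∑ y, quadraticChar F (a * y ^ 2 + b) = -quadraticChar F a := by
  calc ∑ y, quadraticChar F (a * y ^ 2 + b)
      = ∑ w, (#{y | y ^ 2 = w} : ℤ) * quadraticChar F (a * w + b) := by
        rw [← sum_fiberwise' univ (· ^ 2) fun w => quadraticChar F (a * w + b)]
        simp only [sum_const, nsmul_eq_mul]
    _ = ∑ w, (quadraticChar F (a * w + b) + quadraticChar F w * quadraticChar F (a * w + b)) := by
        simp only [card_filter_sq_eq hF]
        congr! 1 with w
        ring
    _ = -quadraticChar F a := by
        rw [sum_add_distrib, quadraticChar_sum_affine hF ha, quadraticChar_sum_mul_affine hF a hb,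
          zero_add]

lemma sum_sq_sum_quadraticChar_add (hF : ringChar F ≠ 2) (f : F → F) :
    ∑ c, (∑ x, (quadraticChar F (f x + c) : ℤ)) ^ 2
      = Fintype.card F * ∑ y, (#{x | f x = f y} : ℤ) - Fintype.card F ^ 2 := by
  calc ∑ c, (∑ x, (quadraticChar F (f x + c) : ℤ)) ^ 2
      = ∑ y, ∑ x, ∑ c, quadraticChar F (f x + c) * quadraticChar F (f y + c) := by
        simp only [sq, sum_mul_sum]
        rw [sum_comm, sum_congr rfl fun _ _ => sum_comm, sum_comm]
    _ = ∑ y, ∑ x, ((Fintype.card F : ℤ) * (if f x = f y then 1 else 0) - 1) := by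
        simp only [quadraticChar_sum_add_mul_add hF]
        congr! 2 with y _ x _
        split_ifs <;> ring
    _ = _ := by
        simp only [sum_sub_distrib, ← mul_sum, sum_boole, sum_const, card_univ]
        ring

lemma card_filter_quadratic_eq_zero (hF : ringChar F ≠ 2) (b c : F) :
    (#{x | x ^ 2 + b * x + c = 0} : ℤ) = quadraticChar F (b ^ 2 - 4 * c) + 1 := by
  have h2 : (2 : F) ≠ 0 := Ring.two_ne_zero hF
  rw [← card_filter_sq_eq hF, card_equiv ((Equiv.mulLeft₀ 2 h2).trans (Equiv.addRight b))]
  intro x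
  simp only [mem_filter, mem_univ, true_and, Equiv.trans_apply, Equiv.mulLeft₀_apply,
    Equiv.coe_addRight]
  constructor
  · intro h; linear_combination 4 * h
  · intro h
    apply mul_left_cancel₀ (pow_ne_zero 2 h2)
    linear_combination h

lemma card_filter_sub_mul_eq_zero (g : F → F) (y : F) :
    #{x | (x - y) * g x = 0} = #{x | g x = 0} + if g y = 0 then 0 else 1 := by
  have hfilter : univ.filter (fun x => (x - y) * g x = 0) = insert y (univ.filter fun x => g x = 0) := by
    ext x
    simp [sub_eq_zero]
  rw [hfilter, card_insert_eq_ite]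
  simp only [mem_filter, mem_univ, true_and]
  split_ifs <;> rfl

lemma sum_card_filter_cubic_eq (hF : ringChar F ≠ 2) (h3 : (3 : F) ≠ 0) {a : F} (ha : a ≠ 0) :
    ∑ y, (#{x | x ^ 3 + a * x = y ^ 3 + a * y} : ℤ)
      = 2 * Fintype.card F - 1 - quadraticChar F (-3) - quadraticChar F (-3 * a) := by
  have hfiber (y : F) : (#{x | x ^ 3 + a * x = y ^ 3 + a * y} : ℤ)
      = quadraticChar F (-3 * y ^ 2 + -(4 * a)) + 2 - if y ^ 2 = -a / 3 then 1 else 0 := by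
    have hfactor (x : F) : x ^ 3 + a * x = y ^ 3 + a * y
        ↔ (x - y) * (x ^ 2 + y * x + (y ^ 2 + a)) = 0 := by
      rw [← sub_eq_zero]; ring_nf
    have hdiag : y ^ 2 + y * y + (y ^ 2 + a) = 0 ↔ y ^ 2 = -a / 3 := by
      rw [eq_div_iff h3]; constructor <;> intro h <;> linear_combination h
    simp only [hfactor, card_filter_sub_mul_eq_zero, hdiag]
    push_cast
    rw [card_filter_quadratic_eq_zero hF]
    split_ifs <;> ring_nf
  have hsq : quadraticChar F (-a / 3) = quadraticChar F (-3 * a) := by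
    rw [show -a / 3 = -3 * a * (3⁻¹) ^ 2 by field_simp, map_mul,
      quadraticChar_sq_one' (inv_ne_zero h3), mul_one]
  have h4 : (4 : F) ≠ 0 := by
    rw [show (4 : F) = 2 * 2 by norm_num]
    exact mul_ne_zero (Ring.two_ne_zero hF) (Ring.two_ne_zero hF)
  simp only [hfiber, sum_sub_distrib, sum_add_distrib, sum_boole]
  rw [quadraticChar_sum_sq_mul_add hF (neg_ne_zero.mpr h3)
      (neg_ne_zero.mpr (mul_ne_zero h4 ha)), card_filter_sq_eq hF, hsq]
  simp only [sum_const, card_univ, nsmul_eq_mul]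
  ring

lemma sum_sq_sum_quadraticChar_cubic_family (hF : ringChar F ≠ 2) (h3 : (3 : F) ≠ 0) {t : F}
    (ht : t ≠ 0) :
    ∑ s, (∑ x, (quadraticChar F (x ^ 3 + t ^ 2 * x + s * t ^ 4) : ℤ)) ^ 2
      = Fintype.card F ^ 2 - Fintype.card F
        - 2 * Fintype.card F * quadraticChar F (-3) := by
  calc _ = ∑ c, (∑ x, (quadraticChar F (x ^ 3 + t ^ 2 * x + c) : ℤ)) ^ 2 :=
        Fintype.sum_bijective _ (mulRight_bijective₀ _ (pow_ne_zero 4 ht)) _ _ fun _ => rfl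
    _ = _ := by
      rw [sum_sq_sum_quadraticChar_add hF (fun x => x ^ 3 + t ^ 2 * x),
        sum_card_filter_cubic_eq hF h3 (pow_ne_zero 2 ht), map_mul, quadraticChar_sq_one' ht]
      ring

lemma quadraticChar_sum_cube (hF : ringChar F ≠ 2) : ∑ x : F, quadraticChar F (x ^ 3) = 0 := by
  rw [← quadraticChar_sum_zero hF]
  refine sum_congr rfl fun x _ => ?_
  rcases eq_or_ne x 0 with rfl | hx
  · simp
  · rw [pow_succ, map_mul, quadraticChar_sq_one' hx, one_mul]

/-- For a prime `p ≥ 5` and the two-parameter family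
`y² = x³ + t² x + s t⁴`, the second-moment sum equals
`p³ - 2p² + p - 2(p² - p) χ(-3)`. -/
theorem second_moment_two_param_two (p : ℕ) [Fact p.Prime] (hp : 5 ≤ p) :
    ∑ t : ZMod p, ∑ s : ZMod p,
      (-∑ x : ZMod p,
        legendreSym p ((x.val : ℤ) ^ 3 + (t.val : ℤ) ^ 2 * (x.val : ℤ)
          + (s.val : ℤ) * (t.val : ℤ) ^ 4)) ^ 2 =
      (p : ℤ) ^ 3 - 2 * (p : ℤ) ^ 2 + (p : ℤ)
        - 2 * ((p : ℤ) ^ 2 - (p : ℤ)) * legendreSym p (-3) := by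
  have hF : ringChar (ZMod p) ≠ 2 := by rw [ZMod.ringChar_zmod_n]; omega
  have h3 : (3 : ZMod p) ≠ 0 := by
    intro h
    have := Nat.le_of_dvd (by norm_num) ((ZMod.natCast_eq_zero_iff 3 p).mp (by exact_mod_cast h))
    omega
  have hzero (s : ZMod p) :
      ∑ x, (quadraticChar (ZMod p) (x ^ 3 + 0 ^ 2 * x + s * 0 ^ 4) : ℤ) = 0 := by
    simpa using quadraticChar_sum_cube hF
  simp only [legendreSym, neg_sq, Int.cast_add, Int.cast_mul, Int.cast_pow, Int.cast_natCast,
    ZMod.natCast_zmod_val, Int.cast_neg, Int.cast_ofNat]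
  rw [Fintype.sum_eq_add_sum_compl 0, sum_congr rfl fun t ht =>
    sum_sq_sum_quadraticChar_cubic_family hF h3 (by simpa using ht)]
  simp only [hzero]
  simp only [ne_eq, OfNat.ofNat_ne_zero, not_false_eq_true, zero_pow, sum_const_zero,
    sum_const, card_compl, card_singleton, ZMod.card, nsmul_eq_mul]
  push_cast [Nat.one_le_of_lt hp]
  ring
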